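/- The graph Δ₂ obtained from Γ[K₂] by dual Seidel switching with respect to φ̃ — the simple graph on V × ZMod 2 with (u,i) adjacent to (v,j) iff (r(u),i) ≠ (v,j) and (r(u) = v or r(u) is adjacent to v in Γ) — is a well-defined simple graph (the relation is symmetric and irreflexive) and is a strictly Deza graph with parameters (486,45,44,4): it is 45-regular, any two distinct vertices have exactly 44 or exactly 4 common neighbours, it has diameter 2, and it is not strongly regular. -/

import Mathlib

open SimpleGraph Polynomial Matrix

/-- `V` is the 5-dimensional vector space over `GF(3)`. -/
abbrev V : Type := Fin 5 → ZMod 3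

/-- The specific parity-check matrix of the ternary Golay code. -/
def H : Matrix (Fin 5) (Fin 11) (ZMod 3) :=
  !![1,1,1,2,2,0,1,0,0,0,0;
     1,1,2,1,0,2,0,1,0,0,0;
     1,2,1,0,1,2,0,0,1,0,0;
     1,2,0,1,2,1,0,0,0,1,0;
     1,0,2,2,1,1,0,0,0,0,1]

/-- `S₂ = {±x₁, …, ±x₁₁}` where `x₁, …, x₁₁` are the columns of `H`. -/
def S2 : Set V := {v | ∃ j : Fin 11, v = (fun i => H i j) ∨ v = -(fun i => H i j)}

instance : DecidablePred (· ∈ S2) := fun v =>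
  decidable_of_iff (∃ j : Fin 11, v = (fun i => H i j) ∨ v = -(fun i => H i j)) Iff.rfl

/-- The reversal map sending `(a,b,c,d,e)` to `(e,d,c,b,a)`. -/
def r (v : V) : V := fun i => v i.rev

/-- The Berlekamp–Van Lint–Seidel graph `Γ = Cay(V, S₂)`:
`u` is adjacent to `v` iff `u ≠ v` and `u - v ∈ S₂`. -/
def Γ : SimpleGraph V where
  Adj u v := u ≠ v ∧ u - v ∈ S2
  symm := ⟨by
    rintro u v ⟨hne, j, hj⟩
    refine ⟨hne.symm, j, ?_⟩
    rcases hj with h | h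
    · right; rw [← neg_sub, h]
    · left; rw [← neg_sub, h, neg_neg]⟩
  loopless := ⟨fun v h => h.1 rfl⟩

instance : DecidableRel Γ.Adj := fun u v =>
  decidable_of_iff (u ≠ v ∧ u - v ∈ S2) Iff.rfl

lemma r_r (v : V) : r (r v) = v := funext fun i => by simp [r, Fin.rev_rev]

lemma r_sub (a b : V) : r (a - b) = r a - r b := rfl

lemma S2_neg : ∀ v ∈ S2, -v ∈ S2 := by
  rintro v ⟨j, h | h⟩
  · exact ⟨j, Or.inr (by rw [h])⟩
  · exact ⟨j, Or.inl (by rw [h, neg_neg])⟩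

lemma S2_r : ∀ v ∈ S2, r v ∈ S2 := by
  have base : ∀ j : Fin 11, r (fun i => H i j) ∈ S2 := by decide
  rintro v ⟨j, h | h⟩
  · rw [h]; exact base j
  · rw [h]
    have hneg : r (-(fun i => H i j)) = -(r (fun i => H i j)) := rfl
    rw [hneg]; exact S2_neg _ (base j)

set_option maxRecDepth 40000 in
lemma sub_r_not_mem : ∀ v : V, v - r v ∉ S2 := by decide

/-- The graph `Δ₂` obtained from the strong product `Γ[K₂]` by dual Seidel switching with
respect to `φ̃(v,i) = (r v, i)`: `(u,i)` is adjacent to `(v,j)` iff `(r u, i) ≠ (v, j)` and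
(`r u = v` or `r u` is adjacent to `v` in `Γ`). -/
def Δ₂ : SimpleGraph (V × ZMod 2) where
  Adj p q := (r p.1, p.2) ≠ q ∧ (r p.1 = q.1 ∨ Γ.Adj (r p.1) q.1)
  symm := ⟨by
    rintro ⟨u, i⟩ ⟨v, j⟩ ⟨h1, h2⟩
    rcases h2 with h | h
    · subst h
      refine ⟨?_, Or.inl (r_r u)⟩
      intro hc
      apply h1
      have hj : j = i := (Prod.ext_iff.mp hc).2
      rw [hj]
    · obtain ⟨hne, hmem⟩ := h
      refine ⟨?_, Or.inr ⟨fun hh => hne (by rw [← hh, r_r]), ?_⟩⟩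
      · intro hc
        have h' : r v = u := (Prod.ext_iff.mp hc).1
        exact hne (by rw [← h', r_r])
      · have key : r v - u = -(r (r u - v)) := by
          rw [r_sub, r_r]; abel
        rw [key]
        exact S2_neg _ (S2_r _ hmem)⟩
  loopless := ⟨by
    rintro ⟨u, i⟩ ⟨h1, h2⟩
    rcases h2 with h | h
    · exact h1 (by rw [h])
    · obtain ⟨-, hmem⟩ := h
      exact sub_r_not_mem (r u) (by rw [r_r]; exact hmem)⟩

instance : DecidableRel Δ₂.Adj := fun p q =>
  decidable_of_iff ((r p.1, p.2) ≠ q ∧ (r p.1 = q.1 ∨ Γ.Adj (r p.1) q.1)) Iff.rfl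

/-!
`Γ` is the Cayley graph of `V` with connection set `S₂`, the signed columns of a parity-check
matrix of the perfect ternary Golay code. It is strongly regular with parameters
`(243, 22, 1, 2)`: a nonzero `d` is a difference of two elements of `S₂` in exactly one way if
`d ∈ S₂` and in exactly two ways otherwise (this is checked by computation).

In the strong product `Γ[K₂]` every vertex then has `2 · 23 - 1 = 45` neighbours, and two
distinct vertices have `2 · 23 - 2 = 44` common neighbours if they lie over the same vertex of
`Γ`, and `2 · (1 + 2) - 2 = 4` or `2 · 2 = 4` otherwise. In `Δ₂` the neighbourhood of `p` is the
`Γ[K₂]`-neighbourhood of `φ̃ p`, and `φ̃` is injective, so `Δ₂` has the same degree and the same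
common-neighbour counts. Both counts are positive and `Δ₂` is not complete, so its diameter is
`2`; adjacent pairs have `44` or `4` common neighbours, so it is not strongly regular.
-/

open Finset

namespace SimpleGraph

variable {W α : Type*}

section CommonNeighbors

variable [Fintype W] [DecidableEq W] (G : SimpleGraph W) [DecidableRel G.Adj]

theorem card_commonNeighbors_eq_card_inter (v w : W) :
    Fintype.card (G.commonNeighbors v w) = #(G.neighborFinset v ∩ G.neighborFinset w) := by
  rw [← Set.toFinset_card]
  congr 1
  ext
  simp [mem_commonNeighbors]

def closedNeighborFinset (v : W) : Finset W := insert v (G.neighborFinset v)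

@[simp]
theorem mem_closedNeighborFinset {v w : W} :
    w ∈ G.closedNeighborFinset v ↔ w = v ∨ G.Adj v w := by
  simp [closedNeighborFinset]

theorem card_closedNeighborFinset (v : W) : #(G.closedNeighborFinset v) = G.degree v + 1 :=
  card_insert_of_notMem (notMem_neighborFinset_self G v)

theorem card_closedNeighborFinset_inter {v w : W} (hvw : v ≠ w) :
    #(G.closedNeighborFinset v ∩ G.closedNeighborFinset w) =
      Fintype.card (G.commonNeighbors v w) + if G.Adj v w then 2 else 0 := by
  rw [card_commonNeighbors_eq_card_inter]
  split_ifs with hadj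
  · have : G.closedNeighborFinset v ∩ G.closedNeighborFinset w =
        insert v (insert w (G.neighborFinset v ∩ G.neighborFinset w)) := by
      ext u
      simp only [mem_inter, mem_closedNeighborFinset, mem_insert, mem_neighborFinset]
      grind [G.adj_symm, G.loopless]
    rw [this, card_insert_of_notMem (by simp [hvw]), card_insert_of_notMem (by simp)]
  · rw [add_zero]
    congr 1
    ext u
    simp only [mem_inter, mem_closedNeighborFinset, mem_neighborFinset]
    grind [G.adj_symm, G.loopless]

end CommonNeighbors

theorem ediam_eq_two_of_card_commonNeighbors_pos [Fintype W] [Nontrivial W] {G : SimpleGraph W}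
    [DecidableRel G.Adj] (hG : G ≠ ⊤)
    (h : ∀ v w, v ≠ w → ¬G.Adj v w → 0 < Fintype.card (G.commonNeighbors v w)) :
    G.ediam = 2 := by
  refine le_antisymm (ediam_le_iff.mpr fun v w ↦ not_lt.mp fun hlt ↦ ?_) ?_
  · obtain ⟨hvw, hnadj, hempty⟩ := two_lt_edist_iff.mp hlt
    simpa [hempty] using h v w hvw hnadj
  · by_contra! hlt
    exact hG (ediam_eq_one.mp (le_antisymm (Order.le_of_lt_succ hlt)
      (Order.one_le_iff_pos.mpr (pos_iff_ne_zero.mpr ediam_ne_zero))))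

section Cayley

variable [AddCommGroup W] [Fintype W] {G : SimpleGraph W} [DecidableRel G.Adj]
  {S : Set W} [DecidablePred (· ∈ S)]

theorem degree_eq_card_of_adj_iff_sub_mem (hG : ∀ v w, G.Adj v w ↔ v - w ∈ S) (v : W) :
    G.degree v = #{s | s ∈ S} := by
  rw [← card_neighborFinset_eq_degree, neighborFinset_eq_filter]
  exact card_equiv (Equiv.subLeft v) fun w ↦ by simp [hG]

theorem card_commonNeighbors_of_adj_iff_sub_mem [DecidableEq W] (hG : ∀ v w, G.Adj v w ↔ v - w ∈ S) (v w : W) :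
    Fintype.card (G.commonNeighbors v w) = #{s | s ∈ S ∧ s - (v - w) ∈ S} := by
  rw [card_commonNeighbors_eq_card_inter]
  exact card_equiv (Equiv.subLeft v) fun u ↦ by simp [hG]

end Cayley

section StrongProduct

def strongProd (G : SimpleGraph W) (H : SimpleGraph α) : SimpleGraph (W × α) where
  Adj p q := p ≠ q ∧ (p.1 = q.1 ∨ G.Adj p.1 q.1) ∧ (p.2 = q.2 ∨ H.Adj p.2 q.2)
  symm := ⟨fun _ _ ⟨hne, h₁, h₂⟩ ↦
    ⟨hne.symm, h₁.imp Eq.symm G.adj_symm, h₂.imp Eq.symm H.adj_symm⟩⟩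
  loopless := ⟨fun _ h ↦ h.1 rfl⟩

instance [DecidableEq W] [DecidableEq α] (G : SimpleGraph W) (H : SimpleGraph α)
    [DecidableRel G.Adj] [DecidableRel H.Adj] : DecidableRel (G.strongProd H).Adj :=
  fun p q ↦ inferInstanceAs
    (Decidable (p ≠ q ∧ (p.1 = q.1 ∨ G.Adj p.1 q.1) ∧ (p.2 = q.2 ∨ H.Adj p.2 q.2)))

theorem strongProd_top_adj {G : SimpleGraph W} {p q : W × α} :
    (G.strongProd ⊤).Adj p q ↔ p ≠ q ∧ (p.1 = q.1 ∨ G.Adj p.1 q.1) := by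
  simp [strongProd, em]

variable [Fintype W] [DecidableEq W] (G : SimpleGraph W) [DecidableRel G.Adj]
  [Fintype α] [DecidableEq α]

theorem neighborFinset_strongProd_top (p : W × α) :
    (G.strongProd ⊤).neighborFinset p = (G.closedNeighborFinset p.1 ×ˢ univ).erase p := by
  ext q
  simp [strongProd_top_adj, eq_comm]

theorem degree_strongProd_top (p : W × α) :
    (G.strongProd ⊤).degree p + 1 = Fintype.card α * (G.degree p.1 + 1) := by
  rw [← card_neighborFinset_eq_degree, neighborFinset_strongProd_top,
    card_erase_add_one (by simp), card_product, card_closedNeighborFinset, card_univ, mul_comm]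

theorem card_commonNeighbors_strongProd_top {p q : W × α} (hpq : p ≠ q) :
    Fintype.card ((G.strongProd ⊤).commonNeighbors p q) +
        (if p.1 = q.1 ∨ G.Adj p.1 q.1 then 2 else 0) =
      Fintype.card α * #(G.closedNeighborFinset p.1 ∩ G.closedNeighborFinset q.1) := by
  have hcommon : (G.strongProd ⊤).neighborFinset p ∩ (G.strongProd ⊤).neighborFinset q =
      (G.closedNeighborFinset p.1 ∩ G.closedNeighborFinset q.1) ×ˢ univ \ {p, q} := by
    ext w
    simp only [mem_inter, mem_neighborFinset, strongProd_top_adj, mem_sdiff, mem_product,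
      mem_closedNeighborFinset, mem_univ, and_true, mem_insert, mem_singleton]
    grind
  rw [card_commonNeighbors_eq_card_inter, hcommon, ← card_univ, mul_comm, ← card_product]
  split_ifs with h
  · rw [← card_pair hpq, card_sdiff_add_card_eq_card]
    simp only [insert_subset_iff, singleton_subset_iff, mem_product, mem_inter,
      mem_closedNeighborFinset, mem_univ, and_true]
    grind [G.adj_symm]
  · rw [add_zero, sdiff_eq_self_of_disjoint]
    simp only [disjoint_insert_right, disjoint_singleton_right, mem_product, mem_inter,
      mem_closedNeighborFinset]
    grind [G.adj_symm]

variable {G}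

theorem IsRegularOfDegree.strongProd_top {k : ℕ} (h : G.IsRegularOfDegree k) :
    (G.strongProd (⊤ : SimpleGraph α)).IsRegularOfDegree (Fintype.card α * (k + 1) - 1) :=
  fun p ↦ by have := G.degree_strongProd_top p; rw [h.degree_eq] at this; omega

theorem IsSRGWith.card_commonNeighbors_strongProd_top {n k ℓ μ : ℕ} (h : G.IsSRGWith n k ℓ μ)
    {p q : W × α} (hpq : p ≠ q) :
    Fintype.card ((G.strongProd ⊤).commonNeighbors p q) =
      if p.1 = q.1 then Fintype.card α * (k + 1) - 2
      else if G.Adj p.1 q.1 then Fintype.card α * (ℓ + 2) - 2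
      else Fintype.card α * μ := by
  have hcard := G.card_commonNeighbors_strongProd_top hpq
  by_cases h₁ : p.1 = q.1
  · rw [if_pos (Or.inl h₁), h₁, inter_self, card_closedNeighborFinset,
      h.regular.degree_eq] at hcard
    rw [if_pos h₁]
    omega
  rw [card_closedNeighborFinset_inter G h₁] at hcard
  by_cases h₂ : G.Adj p.1 q.1
  · rw [if_pos (Or.inr h₂), if_pos h₂, h.of_adj _ _ h₂] at hcard
    rw [if_neg h₁, if_pos h₂]
    omega
  · rw [if_neg (not_or.2 ⟨h₁, h₂⟩), if_neg h₂, h.of_not_adj h₁ h₂] at hcard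
    rw [if_neg h₁, if_neg h₂]
    omega

end StrongProduct

section Switching

variable {G D : SimpleGraph W} {σ : W → W}

theorem commonNeighbors_eq_of_adj_iff (h : ∀ p q, D.Adj p q ↔ G.Adj (σ p) q) (p q : W) :
    D.commonNeighbors p q = G.commonNeighbors (σ p) (σ q) :=
  Set.ext fun w ↦ by simp only [mem_commonNeighbors, h]

variable [Fintype W] [DecidableRel G.Adj] [DecidableRel D.Adj]

theorem degree_eq_of_adj_iff (h : ∀ p q, D.Adj p q ↔ G.Adj (σ p) q) (p : W) :
    D.degree p = G.degree (σ p) := by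
  simp_rw [← card_neighborSet_eq_degree]
  exact Fintype.card_congr (Equiv.setCongr (Set.ext (h p)))

theorem card_commonNeighbors_eq_of_adj_iff (h : ∀ p q, D.Adj p q ↔ G.Adj (σ p) q) (p q : W) :
    Fintype.card (D.commonNeighbors p q) = Fintype.card (G.commonNeighbors (σ p) (σ q)) :=
  Fintype.card_congr (Equiv.setCongr (commonNeighbors_eq_of_adj_iff h p q))

end Switching

end SimpleGraph

theorem zero_notMem_S2 : (0 : V) ∉ S2 := by decide

theorem Γ_adj_iff (u v : V) : Γ.Adj u v ↔ u - v ∈ S2 :=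
  ⟨And.right, fun h ↦ ⟨fun huv ↦ zero_notMem_S2 (by rwa [huv, sub_self] at h), h⟩⟩

def S2fin : Finset V :=
  (univ.image fun j : Fin 11 ↦ fun i ↦ H i j) ∪ univ.image fun j : Fin 11 ↦ -fun i ↦ H i j

theorem mem_S2fin {v : V} : v ∈ S2fin ↔ v ∈ S2 := by
  simp only [S2fin, mem_union, mem_image, mem_univ, true_and, S2, Set.mem_ofPred_eq, exists_or,
    eq_comm]

theorem filter_mem_S2_eq_S2fin : ({v | v ∈ S2} : Finset V) = S2fin := by
  ext v
  simp [mem_S2fin]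

/-- Base-3 encoding of `V`: the kernel compares codes much faster than vectors, which keeps the
computation in `card_filter_code_sub_mem` feasible. -/
def code : V ≃ Fin (3 ^ 5) := finFunctionFinEquiv

theorem card_filter_code_sub_mem : ∀ d : V, d ≠ 0 →
    #{s ∈ S2fin | code (s - d) ∈ S2fin.image code} =
      if code d ∈ S2fin.image code then 1 else 2 := by
  decide +kernel

theorem card_filter_sub_mem_S2 {d : V} (hd : d ≠ 0) :
    #{s | s ∈ S2 ∧ s - d ∈ S2} = if d ∈ S2 then 1 else 2 := by
  have h := card_filter_code_sub_mem d hd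
  simp only [code.injective.mem_finset_image, mem_S2fin] at h
  rw [← h, ← filter_filter, filter_mem_S2_eq_S2fin]

theorem Γ_isSRGWith : Γ.IsSRGWith 243 22 1 2 where
  card := by simp
  regular v := by
    rw [degree_eq_card_of_adj_iff_sub_mem Γ_adj_iff, filter_mem_S2_eq_S2fin]
    decide
  of_adj u v h := by
    rw [card_commonNeighbors_of_adj_iff_sub_mem Γ_adj_iff,
      card_filter_sub_mem_S2 (sub_ne_zero.mpr h.ne), if_pos h.2]
  of_not_adj u v huv h := by
    rw [card_commonNeighbors_of_adj_iff_sub_mem Γ_adj_iff,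
      card_filter_sub_mem_S2 (sub_ne_zero.mpr huv), if_neg (mt (Γ_adj_iff u v).mpr h)]

theorem Δ₂_adj_iff (p q : V × ZMod 2) : Δ₂.Adj p q ↔ (Γ.strongProd ⊤).Adj (r p.1, p.2) q := by
  rw [strongProd_top_adj]
  rfl

theorem r_injective : Function.Injective r := Function.LeftInverse.injective r_r

theorem degree_Δ₂ (p : V × ZMod 2) : Δ₂.degree p = 45 := by
  rw [degree_eq_of_adj_iff Δ₂_adj_iff, Γ_isSRGWith.regular.strongProd_top.degree_eq]
  rfl

theorem card_commonNeighbors_Δ₂ {p q : V × ZMod 2} (hpq : p ≠ q) :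
    Fintype.card (Δ₂.commonNeighbors p q) = if p.1 = q.1 then 44 else 4 := by
  have hφ : (r p.1, p.2) ≠ (r q.1, q.2) := by
    simpa [Prod.ext_iff, r_injective.eq_iff] using hpq
  rw [card_commonNeighbors_eq_of_adj_iff Δ₂_adj_iff,
    Γ_isSRGWith.card_commonNeighbors_strongProd_top hφ]
  simp only [r_injective.eq_iff]
  split_ifs <;> rfl

theorem Δ₂_ne_top : Δ₂ ≠ ⊤ :=
  ne_top_iff_exists_not_adj.mpr ⟨(0, 0), (![1, 1, 0, 0, 0], 0), by decide, by decide⟩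

/-- The relation defining `Δ₂` is symmetric and irreflexive (so `Δ₂` is a well-defined simple
graph), and `Δ₂` is a strictly Deza graph with parameters `(486, 45, 44, 4)`: it has 486
vertices, is 45-regular, any two distinct vertices have exactly 44 or exactly 4 common
neighbours, it has diameter 2, and it is not strongly regular. -/
theorem delta2_is_strictly_deza :
    (∀ p q : V × ZMod 2,
      ((r p.1, p.2) ≠ q ∧ (r p.1 = q.1 ∨ Γ.Adj (r p.1) q.1)) →
      ((r q.1, q.2) ≠ p ∧ (r q.1 = p.1 ∨ Γ.Adj (r q.1) p.1))) ∧
    (∀ p : V × ZMod 2, ¬ ((r p.1, p.2) ≠ p ∧ (r p.1 = p.1 ∨ Γ.Adj (r p.1) p.1))) ∧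
    Fintype.card (V × ZMod 2) = 486 ∧
    Δ₂.IsRegularOfDegree 45 ∧
    (∀ p q : V × ZMod 2, p ≠ q →
      Fintype.card (Δ₂.commonNeighbors p q) = 44 ∨
      Fintype.card (Δ₂.commonNeighbors p q) = 4) ∧
    Δ₂.diam = 2 ∧
    ¬ ∃ ℓ μ : ℕ, Δ₂.IsSRGWith 486 45 ℓ μ := by
  have hcommon_pos : ∀ p q, p ≠ q → 0 < Fintype.card (Δ₂.commonNeighbors p q) := fun p q hpq ↦ by
    rw [card_commonNeighbors_Δ₂ hpq]
    split_ifs <;> norm_num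
  refine ⟨fun _ _ ↦ Δ₂.adj_symm, fun p ↦ Δ₂.loopless.irrefl p, by simp, degree_Δ₂,
    fun p q hpq ↦ ?_, ?_, ?_⟩
  · rw [card_commonNeighbors_Δ₂ hpq]
    split_ifs <;> simp
  · rw [diam, ediam_eq_two_of_card_commonNeighbors_pos Δ₂_ne_top fun p q hpq _ ↦
      hcommon_pos p q hpq]
    rfl
  · rintro ⟨ℓ, μ, h⟩
    have h44 := h.of_adj ((0 : V), 0) (0, 1) (by decide)
    have h4 := h.of_adj ((0 : V), 0) (fun i ↦ H i 0, 0) (by decide)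
    rw [card_commonNeighbors_Δ₂ (by decide), if_pos rfl] at h44
    rw [card_commonNeighbors_Δ₂ (by decide), if_neg (by decide)] at h4
    omega
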